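/- Let T₂ < T₃, Λ₀ > 0, d₀ ≥ 0, L ≥ 0, and suppose (T₃ - 3T₂)²/8 - T₃·L ≥ Λ₀ + d₀. Let v ∈ ℝ² with |v·n| < Λ₀ (n a unit vector), and let g : [0,T₃] → ℝ² be measurable with ∫_0^{T₃} |g(σ)·n| dσ ≤ L. Then for every s ∈ ((T₃+T₂)/2 + T₂/2, T₃] satisfying s - T₂ > (T₃ - T₂)/2, one has |(1 - e^{-s}) v·n + s·∫_0^{T₂-0} g(σ)·n dσ + (s-T₂)²/2| ≥ -Λ₀ - T₃ L + (s-T₂)²/2 > d₀. -/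
import Mathlib


open MeasureTheory intervalIntegral

theorem stmt12 (T₂ T₃ Λ₀ d₀ L : ℝ) (hT₂ : 0 ≤ T₂) (hT : T₂ < T₃)
    (hΛ : 0 < Λ₀) (hd : 0 ≤ d₀) (hL : 0 ≤ L)
    (hbig : (T₃ - 3 * T₂) ^ 2 / 8 - T₃ * L ≥ Λ₀ + d₀)
    (a : ℝ) (ha : |a| < Λ₀)
    (g : ℝ → ℝ) (hgi : IntervalIntegrable g volume 0 T₃)
    (hg : (∫ σ in (0:ℝ)..T₃, |g σ|) ≤ L) :
    ∀ s ∈ Set.Ioc ((T₃ + T₂) / 2 + T₂ / 2) T₃, s - T₂ > (T₃ - T₂) / 2 →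
      |(1 - Real.exp (-s)) * a + s * (∫ σ in (0:ℝ)..T₂, g σ) + (s - T₂) ^ 2 / 2|
          ≥ -Λ₀ - T₃ * L + (s - T₂) ^ 2 / 2 ∧
      -Λ₀ - T₃ * L + (s - T₂) ^ 2 / 2 > d₀ := by
  intro s hs hs2
  obtain ⟨hs1, hs3⟩ := hs
  have hspos : 0 < s := by nlinarith
  -- bound on the first term
  have hexp1 : Real.exp (-s) ≤ 1 := Real.exp_le_one_iff.mpr (by linarith)
  have hexp0 : 0 < Real.exp (-s) := Real.exp_pos _
  have hA : |(1 - Real.exp (-s)) * a| < Λ₀ := by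
    rw [abs_mul]
    have h1 : |1 - Real.exp (-s)| ≤ 1 := by
      rw [abs_of_nonneg (by linarith)]; linarith
    calc |1 - Real.exp (-s)| * |a| ≤ 1 * |a| :=
          mul_le_mul_of_nonneg_right h1 (abs_nonneg a)
      _ = |a| := one_mul _
      _ < Λ₀ := ha
  -- bound on the integral term
  have hsub : Set.uIcc (0:ℝ) T₂ ⊆ Set.uIcc (0:ℝ) T₃ :=
    Set.uIcc_subset_uIcc (Set.left_mem_uIcc)
      (by rw [Set.uIcc_of_le (by linarith)]; exact ⟨by linarith, le_of_lt hT⟩)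
  have hgi2 : IntervalIntegrable g volume 0 T₂ := hgi.mono_set hsub
  have hmono : (∫ σ in (0:ℝ)..T₂, |g σ|) ≤ ∫ σ in (0:ℝ)..T₃, |g σ| := by
    have h1 : IntervalIntegrable (fun σ => |g σ|) volume 0 T₂ := hgi2.abs
    have h2 : IntervalIntegrable (fun σ => |g σ|) volume T₂ T₃ :=
      hgi.abs.mono_set (Set.uIcc_subset_uIcc
        (by rw [Set.uIcc_of_le (by linarith)]; exact ⟨hT₂, le_of_lt hT⟩)
        (by rw [Set.uIcc_of_le (by linarith)]; exact ⟨by linarith, le_refl _⟩))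
    have hsplit := intervalIntegral.integral_add_adjacent_intervals h1 h2
    have hpos : 0 ≤ ∫ σ in T₂..T₃, |g σ| :=
      intervalIntegral.integral_nonneg (le_of_lt hT) (fun x _ => abs_nonneg _)
    linarith [hsplit]
  have hIab : |∫ σ in (0:ℝ)..T₂, g σ| ≤ L := by
    calc |∫ σ in (0:ℝ)..T₂, g σ| ≤ ∫ σ in (0:ℝ)..T₂, |g σ| :=
          intervalIntegral.abs_integral_le_integral_abs hT₂
      _ ≤ ∫ σ in (0:ℝ)..T₃, |g σ| := hmono
      _ ≤ L := hg
  have hB : |s * ∫ σ in (0:ℝ)..T₂, g σ| ≤ T₃ * L := by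
    rw [abs_mul, abs_of_pos hspos]
    exact mul_le_mul hs3 hIab (abs_nonneg _) (by linarith)
  constructor
  · have h1 := neg_abs_le ((1 - Real.exp (-s)) * a)
    have h2 := neg_abs_le (s * ∫ σ in (0:ℝ)..T₂, g σ)
    have h3 := le_abs_self ((1 - Real.exp (-s)) * a + s * (∫ σ in (0:ℝ)..T₂, g σ) + (s - T₂) ^ 2 / 2)
    linarith
  · have hT2half : T₂ < T₃ / 2 := by linarith
    have hkey : (s - T₂) ^ 2 / 2 > (T₃ - 3 * T₂) ^ 2 / 8 := by
      nlinarith [sq_nonneg (T₃ - 3 * T₂), sq_nonneg (s - T₂ - T₃ / 2)]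
    linarith
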